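/- arXiv:1809.06523 — 3 statements merged into one kernel-verified Lean document; each statement's English description precedes it below -/
import Mathlib

section
/- Let X be a finite set and let δ : 𝒫(X) → ℝ satisfy δ(A) = 0 whenever |A| ≤ 1. If λ_A ≥ 0 for every A ⊆ X with A ≠ ∅ and A ≠ X, then δ is monotone (A ⊆ B implies δ(A) ≤ δ(B)) and for all A, B ⊆ X and every c ∈ X one has δ(A ∪ {c}) + δ(B ∪ {c}) ≥ δ(A ∪ B ∪ {c}); consequently δ(A ∪ B) + δ(B ∪ C) ≥ δ(A ∪ C) whenever B ≠ ∅. -/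
/-!
Möbius inversion gives `δ A = -∑_{B ⊇ A} λ_B`. Comparing with `A = {x}`, where `δ` vanishes,
yields `δ A = ∑ λ_C` over the `C` that contain `x` but not `A`, for any `x ∈ A`. Such `C` are
neither empty nor `X`, so every term is nonnegative, and monotonicity and
`δ (A ∪ B ∪ {c}) ≤ δ (A ∪ {c}) + δ (B ∪ {c})` hold term by term. The triangle inequality follows
by adding a point `b ∈ B` to `A ∪ C`.
-/

open Finset

theorem Finset.sum_Icc_neg_one_pow_card {α R : Type*} [DecidableEq α] [CommRing R]
    {A C : Finset α} (h : A ⊆ C) :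
    ∑ B ∈ Icc A C, (-1 : R) ^ #B = if A = C then (-1) ^ #A else 0 := by
  have hinj : Set.InjOn (A ∪ ·) (C \ A).powerset := fun D hD E hE hDE => by
    have hD' := disjoint_of_subset_right (mem_powerset.1 hD) disjoint_sdiff
    have hE' := disjoint_of_subset_right (mem_powerset.1 hE) disjoint_sdiff
    simpa [union_sdiff_cancel_left hD', union_sdiff_cancel_left hE'] using
      congrArg (· \ A) hDE
  rw [Icc_eq_image_powerset h, sum_image hinj]
  have hsplit : ∀ D ∈ (C \ A).powerset, (-1 : R) ^ #(A ∪ D) = (-1) ^ #A * (-1) ^ #D :=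
    fun D hD => by
      rw [card_union_of_disjoint (disjoint_of_subset_right (mem_powerset.1 hD) disjoint_sdiff),
        pow_add]
  have halt : ∑ D ∈ (C \ A).powerset, (-1 : R) ^ #D = if C \ A = ∅ then 1 else 0 := by
    exact_mod_cast congrArg (Int.cast : ℤ → R) sum_powerset_neg_one_pow_card
  rw [sum_congr rfl hsplit, ← mul_sum, halt]
  by_cases hCA : C ⊆ A
  · simp [subset_antisymm h hCA]
  · have hAC : A ≠ C := fun hAC => hCA hAC.ge
    simp [sdiff_eq_empty_iff_subset, hCA, hAC]

/-- The paper's `λ_A`: minus the Möbius transform of `δ` over the supersets of `A`. -/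
def lam {X R : Type*} [Fintype X] [DecidableEq X] [CommRing R] (δ : Finset X → R)
    (A : Finset X) : R :=
  ∑ B ∈ univ.filter (fun B => A ⊆ B), (-1 : R) ^ (#A + #B + 1) * δ B

theorem sum_lam_superset {X R : Type*} [Fintype X] [DecidableEq X] [CommRing R]
    (δ : Finset X → R) (A : Finset X) :
    ∑ B ∈ univ.filter (fun B => A ⊆ B), lam δ B = -δ A := by
  have hswap : ∀ B C : Finset X, (B ∈ univ.filter (A ⊆ ·) ∧ C ∈ univ.filter (B ⊆ ·)) ↔
      (B ∈ Icc A C ∧ C ∈ univ.filter (A ⊆ ·)) := fun B C => by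
    simp only [mem_filter, mem_univ, true_and, mem_Icc]
    exact ⟨fun h => ⟨h, h.1.trans h.2⟩, And.left⟩
  have hsq : (-1 : R) ^ #A * (-1) ^ #A = 1 := by rw [← mul_pow]; simp
  calc ∑ B ∈ univ.filter (A ⊆ ·), lam δ B
      = ∑ C ∈ univ.filter (A ⊆ ·), (-1) ^ (#C + 1) * δ C * ∑ B ∈ Icc A C, (-1 : R) ^ #B := by
        unfold lam
        rw [sum_comm' hswap]
        refine sum_congr rfl fun C _ => ?_
        rw [mul_sum]
        exact sum_congr rfl fun B _ => by ring
    _ = ∑ C ∈ univ.filter (A ⊆ ·), if A = C then (-1) ^ (#C + 1) * δ C * (-1) ^ #A else 0 := by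
        refine sum_congr rfl fun C hC => ?_
        rw [sum_Icc_neg_one_pow_card (mem_filter.1 hC).2, mul_ite, mul_zero]
    _ = -δ A := by
        rw [sum_ite_eq, if_pos (mem_filter.2 ⟨mem_univ A, subset_rfl⟩)]
        linear_combination (-δ A) * hsq

section

variable {X R : Type*} [Fintype X] [DecidableEq X] [CommRing R] {δ : Finset X → R}

theorem eq_sum_lam_of_mem {x : X} {A : Finset X} (hx : δ {x} = 0) (hxA : x ∈ A) :
    δ A = ∑ C ∈ univ.filter (x ∈ ·), if A ⊆ C then 0 else lam δ C := by
  have hall : ∑ C ∈ univ.filter (x ∈ ·), lam δ C = 0 := by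
    simpa [hx, singleton_subset_iff] using sum_lam_superset δ {x}
  have hsup : ∑ C ∈ univ.filter (x ∈ ·), (if A ⊆ C then lam δ C else 0) = -δ A := by
    rw [← sum_filter, filter_filter, ← sum_lam_superset δ A]
    exact sum_congr (filter_congr fun C _ => ⟨And.right, fun h => ⟨h hxA, h⟩⟩) fun _ _ => rfl
  have hsplit : ∀ C, (if A ⊆ C then 0 else lam δ C) = lam δ C - if A ⊆ C then lam δ C else 0 :=
    fun C => by split_ifs <;> ring
  simp only [hsplit, sum_sub_distrib, hall, hsup]
  ring

variable [PartialOrder R]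

theorem lam_term_nonneg (hlam : ∀ A : Finset X, A ≠ ∅ → A ≠ univ → 0 ≤ lam δ A)
    {x : X} {A C : Finset X} (hxC : x ∈ C) : 0 ≤ if A ⊆ C then 0 else lam δ C := by
  split_ifs with hAC
  · exact le_rfl
  · exact hlam C (ne_empty_of_mem hxC) fun hC => hAC (hC ▸ subset_univ A)

variable [IsOrderedAddMonoid R]

theorem nonneg_of_lam_nonneg (hδ : ∀ A : Finset X, #A ≤ 1 → δ A = 0)
    (hlam : ∀ A : Finset X, A ≠ ∅ → A ≠ univ → 0 ≤ lam δ A) (A : Finset X) : 0 ≤ δ A := by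
  obtain rfl | ⟨x, hxA⟩ := A.eq_empty_or_nonempty
  · exact (hδ ∅ (by simp)).ge
  · rw [eq_sum_lam_of_mem (hδ {x} (by simp)) hxA]
    exact sum_nonneg fun C hC => lam_term_nonneg hlam (mem_filter.1 hC).2

theorem monotone_of_lam_nonneg (hδ : ∀ A : Finset X, #A ≤ 1 → δ A = 0)
    (hlam : ∀ A : Finset X, A ≠ ∅ → A ≠ univ → 0 ≤ lam δ A) : Monotone δ := by
  intro A B hAB
  obtain rfl | ⟨x, hxA⟩ := A.eq_empty_or_nonempty
  · exact (hδ ∅ (by simp)).trans_le (nonneg_of_lam_nonneg hδ hlam B)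
  rw [eq_sum_lam_of_mem (hδ {x} (by simp)) hxA, eq_sum_lam_of_mem (hδ {x} (by simp)) (hAB hxA)]
  refine sum_le_sum fun C hC => ?_
  by_cases hAC : A ⊆ C
  · rw [if_pos hAC]
    exact lam_term_nonneg hlam (mem_filter.1 hC).2
  · rw [if_neg hAC, if_neg fun hBC => hAC (hAB.trans hBC)]

theorem le_add_of_lam_nonneg (hδ : ∀ A : Finset X, #A ≤ 1 → δ A = 0)
    (hlam : ∀ A : Finset X, A ≠ ∅ → A ≠ univ → 0 ≤ lam δ A) (A B : Finset X) (c : X) :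
    δ (A ∪ B ∪ {c}) ≤ δ (A ∪ {c}) + δ (B ∪ {c}) := by
  have hc : δ {c} = 0 := hδ {c} (by simp)
  rw [eq_sum_lam_of_mem hc (by simp : c ∈ A ∪ B ∪ {c}),
    eq_sum_lam_of_mem hc (by simp : c ∈ A ∪ {c}), eq_sum_lam_of_mem hc (by simp : c ∈ B ∪ {c}),
    ← sum_add_distrib]
  refine sum_le_sum fun C hC => ?_
  have hcC : c ∈ C := (mem_filter.1 hC).2
  have hA := lam_term_nonneg hlam (A := A ∪ {c}) hcC
  have hB := lam_term_nonneg hlam (A := B ∪ {c}) hcC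
  by_cases hABC : A ∪ B ∪ {c} ⊆ C
  · rw [if_pos hABC]
    exact add_nonneg hA hB
  have hAC_or_hBC : ¬A ∪ {c} ⊆ C ∨ ¬B ∪ {c} ⊆ C := by
    rw [← not_and_or]
    rintro ⟨hAC, hBC⟩
    exact hABC (union_union_distrib_right A B {c} ▸ union_subset hAC hBC)
  rw [if_neg hABC]
  rcases hAC_or_hBC with hAC | hBC
  · rw [if_neg hAC]
    exact le_add_of_nonneg_right hB
  · rw [if_neg hBC]
    exact le_add_of_nonneg_left hA

theorem triangle_of_lam_nonneg (hδ : ∀ A : Finset X, #A ≤ 1 → δ A = 0)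
    (hlam : ∀ A : Finset X, A ≠ ∅ → A ≠ univ → 0 ≤ lam δ A) (A B C : Finset X) (hB : B ≠ ∅) :
    δ (A ∪ C) ≤ δ (A ∪ B) + δ (B ∪ C) := by
  obtain ⟨b, hb⟩ := nonempty_iff_ne_empty.2 hB
  have hmono := monotone_of_lam_nonneg hδ hlam
  calc δ (A ∪ C) ≤ δ (A ∪ C ∪ {b}) := hmono subset_union_left
    _ ≤ δ (A ∪ {b}) + δ (C ∪ {b}) := le_add_of_lam_nonneg hδ hlam A C b
    _ ≤ δ (A ∪ B) + δ (B ∪ C) := by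
      gcongr <;> apply hmono
      · exact union_subset subset_union_left (singleton_subset_iff.2 (mem_union_right A hb))
      · exact union_subset subset_union_right (singleton_subset_iff.2 (mem_union_left C hb))

end

/-- Let `X` be finite and `δ : 𝒫(X) → ℝ` with `δ(A) = 0` whenever `|A| ≤ 1`.
If `λ_A ≥ 0` for every `A ≠ ∅, X`, then `δ` is monotone, satisfies
`δ(A ∪ {c}) + δ(B ∪ {c}) ≥ δ(A ∪ B ∪ {c})`, and consequently the triangle inequality
`δ(A ∪ B) + δ(B ∪ C) ≥ δ(A ∪ C)` whenever `B ≠ ∅`. -/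
theorem stmt2 {X : Type*} [Fintype X] [DecidableEq X] (δ : Finset X → ℝ)
    (hδ : ∀ A : Finset X, A.card ≤ 1 → δ A = 0)
    (hlam : ∀ A : Finset X, A ≠ ∅ → A ≠ Finset.univ →
      0 ≤ ∑ B ∈ Finset.univ.filter (fun B => A ⊆ B),
        (-1 : ℝ) ^ (A.card + B.card + 1) * δ B) :
    (∀ A B : Finset X, A ⊆ B → δ A ≤ δ B) ∧
    (∀ (A B : Finset X) (c : X), δ (A ∪ B ∪ {c}) ≤ δ (A ∪ {c}) + δ (B ∪ {c})) ∧
    (∀ A B C : Finset X, B ≠ ∅ → δ (A ∪ C) ≤ δ (A ∪ B) + δ (B ∪ C)) :=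
  ⟨fun _ _ hAB => monotone_of_lam_nonneg hδ hlam hAB, le_add_of_lam_nonneg hδ hlam,
    triangle_of_lam_nonneg hδ hlam⟩
end

section
/- Let (X, δ) be a diversity on a three-element set X = {a, b, c} such that 2·δ({a, b, c}) ≠ δ({a, b}) + δ({a, c}) + δ({b, c}). Then δ is of negative type but δ is not L1-embeddable. -/
/-!
On three points every nonempty `U` satisfies `δ U = δ {a,b,c} - ∑ w_S [U ⊆ S]`, the sum running
over the pairs and singletons `S`, with weights `w_S ≥ 0` by the triangle inequality. Since
`[A ∪ B ⊆ S] = [A ⊆ S] [B ⊆ S]`, the quadratic form of `δ` at `x` with `∑ x = 0` is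
`-∑ w_S (∑_{A ⊆ S} x_A)² ≤ 0`.

For an `L₁` diversity, in each coordinate the spread `max - min` of three reals is half the sum of
their pairwise distances, so `2 δ {a,b,c} = δ {a,b} + δ {a,c} + δ {b,c}`.
-/

open Finset

section Diversity

variable {X : Type*}

def IsL1Embeddable (δ : Finset X → ℝ) : Prop :=
  ∃ (m : ℕ) (φ : X → Fin m → ℝ), ∀ (A : Finset X) (hA : A.Nonempty),
    δ A = ∑ i, (A.sup' hA (fun x => φ x i) - A.inf' hA (fun x => φ x i))

variable [DecidableEq X]

def IsNegativeType [Fintype X] (δ : Finset X → ℝ) : Prop :=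
  ∀ x : Finset X → ℝ, x ∅ = 0 → ∑ A, x A = 0 → ∑ A, ∑ B, x A * x B * δ (A ∪ B) ≤ 0

theorem isNegativeType_of_eq_sub_sum_indicator [Fintype X] {ι : Type*} [Fintype ι]
    {δ : Finset X → ℝ} (t : ℝ) (S : ι → Finset X) (w : ι → ℝ) (hw : ∀ i, 0 ≤ w i)
    (hδ : ∀ U : Finset X, U.Nonempty → δ U = t - ∑ i, w i * if U ⊆ S i then 1 else 0) :
    IsNegativeType δ := by
  intro x hx₀ hsum
  set y : ι → Finset X → ℝ := fun i A => if A ⊆ S i then x A else 0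
  have hterm : ∀ A B, x A * x B * δ (A ∪ B) = x A * x B * t - ∑ i, w i * (y i A * y i B) := by
    intro A B
    rcases (A ∪ B).eq_empty_or_nonempty with hAB | hAB
    · obtain ⟨rfl, rfl⟩ := union_eq_empty.1 hAB
      simp [y, hx₀]
    · rw [hδ _ hAB, mul_sub, mul_sum]
      refine congrArg _ (sum_congr rfl fun i _ => ?_)
      simp only [y, union_subset_iff]
      split_ifs <;> simp_all [mul_comm]
  have hquad : ∑ A, ∑ B, ∑ i, w i * (y i A * y i B) = ∑ i, w i * (∑ A, y i A) ^ 2 := by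
    simp_rw [sq, sum_mul_sum, mul_sum]
    symm
    rw [sum_comm]
    exact sum_congr rfl fun A _ => sum_comm
  calc ∑ A, ∑ B, x A * x B * δ (A ∪ B)
      = ∑ A, ∑ B, x A * x B * t - ∑ i, w i * (∑ A, y i A) ^ 2 := by
        simp only [hterm, sum_sub_distrib, hquad]
    _ = -∑ i, w i * (∑ A, y i A) ^ 2 := by simp [← sum_mul, ← mul_sum, hsum]
    _ ≤ 0 := neg_nonpos.2 (sum_nonneg fun i _ => mul_nonneg (hw i) (sq_nonneg _))


def tripleFace (a b c : X) : Fin 6 → Finset X := ![{a, b}, {a, c}, {b, c}, {a}, {b}, {c}]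

def tripleWeight (δ : Finset X → ℝ) (a b c : X) : Fin 6 → ℝ :=
  ![δ {a, b, c} - δ {a, b}, δ {a, b, c} - δ {a, c}, δ {a, b, c} - δ {b, c},
    δ {a, b} + δ {a, c} - δ {a, b, c}, δ {a, b} + δ {b, c} - δ {a, b, c},
    δ {a, c} + δ {b, c} - δ {a, b, c}]

theorem eq_sub_sum_tripleWeight {δ : Finset X → ℝ} (hδ₁ : ∀ x, δ {x} = 0) {a b c : X}
    (hab : a ≠ b) (hac : a ≠ c) (hbc : b ≠ c) {U : Finset X} (hU : U ⊆ {a, b, c})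
    (hne : U.Nonempty) :
    δ U = δ {a, b, c} -
      ∑ i, tripleWeight δ a b c i * if U ⊆ tripleFace a b c i then 1 else 0 := by
  rw [← mem_powerset] at hU
  simp only [powerset_insert, mem_union, mem_image, mem_powerset, subset_singleton_iff] at hU
  rcases hU with ((rfl | rfl) | ⟨V, rfl | rfl, rfl⟩) | ⟨W, (rfl | rfl) | ⟨V, rfl | rfl, rfl⟩, rfl⟩
  · exact absurd hne not_nonempty_empty
  all_goals simp [Fin.sum_univ_succ, tripleFace, tripleWeight, hδ₁, insert_subset_iff,
    hab, hac, hbc, hab.symm, hac.symm, hbc.symm]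

section Triangle

variable {δ : Finset X → ℝ}
  (htri : ∀ A B C : Finset X, B.Nonempty → δ (A ∪ C) ≤ δ (A ∪ B) + δ (B ∪ C))
include htri

theorem le_insert_of_triangle (hδ₁ : ∀ x, δ {x} = 0) (A : Finset X) (x : X) :
    δ A ≤ δ (insert x A) := by
  simpa [hδ₁] using htri A {x} ∅ (singleton_nonempty x)

theorem insert_le_add_of_triangle {A : Finset X} {x : X} (hx : x ∈ A) (y : X) :
    δ (insert y A) ≤ δ A + δ {x, y} := by
  simpa [insert_eq_of_mem hx] using htri A {x} {y} (singleton_nonempty x)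

theorem tripleWeight_nonneg (hδ₁ : ∀ x, δ {x} = 0) (a b c : X) (i : Fin 6) :
    0 ≤ tripleWeight δ a b c i := by
  have hc : insert c ({a, b} : Finset X) = {a, b, c} := by rw [insert_comm, pair_comm]
  have hb : insert b ({a, c} : Finset X) = {a, b, c} := insert_comm b a {c}
  have hab_le := le_insert_of_triangle htri hδ₁ {a, b} c
  have hac_le := le_insert_of_triangle htri hδ₁ {a, c} b
  have hbc_le := le_insert_of_triangle htri hδ₁ {b, c} a
  have ha_le := insert_le_add_of_triangle htri (mem_insert_self a {b}) c
  have hb_le := insert_le_add_of_triangle htri (A := {a, b}) (x := b) (by simp) c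
  have hc_le := insert_le_add_of_triangle htri (A := {a, c}) (x := c) (by simp) b
  rw [hc] at hab_le ha_le hb_le
  rw [hb] at hac_le hc_le
  rw [pair_comm c b] at hc_le
  fin_cases i <;> simp only [tripleWeight, Fin.reduceFinMk, Matrix.cons_val, sub_nonneg] <;>
    linarith

theorem isNegativeType_of_univ_eq_triple [Fintype X] {a b c : X}
    (hab : a ≠ b) (hac : a ≠ c) (hbc : b ≠ c) (huniv : (univ : Finset X) = {a, b, c})
    (hδ₁ : ∀ x, δ {x} = 0) :
    IsNegativeType δ :=
  isNegativeType_of_eq_sub_sum_indicator _ _ _ (tripleWeight_nonneg htri hδ₁ a b c)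
    fun _ hU => eq_sub_sum_tripleWeight hδ₁ hab hac hbc (huniv ▸ subset_univ _) hU

end Triangle

theorem two_mul_max_sub_min_eq_sum_abs (x y z : ℝ) :
    2 * (max x (max y z) - min x (min y z)) = |x - y| + |x - z| + |y - z| := by
  simp only [max_def, min_def, abs_eq_max_neg, neg_sub]
  split_ifs <;> linarith

theorem IsL1Embeddable.two_mul_triple_eq {δ : Finset X → ℝ} (hδ : IsL1Embeddable δ)
    (a b c : X) : 2 * δ {a, b, c} = δ {a, b} + δ {a, c} + δ {b, c} := by
  obtain ⟨m, φ, hφ⟩ := hδ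
  simp only [hφ _ (insert_nonempty _ _), sup'_insert (H := singleton_nonempty _),
    sup'_insert (H := insert_nonempty _ _), inf'_insert (H := singleton_nonempty _),
    inf'_insert (H := insert_nonempty _ _), sup'_singleton, inf'_singleton, ← sum_add_distrib,
    mul_sum]
  refine sum_congr rfl fun i _ => ?_
  simpa only [max_sub_min_eq_abs'] using two_mul_max_sub_min_eq_sum_abs (φ a i) (φ b i) (φ c i)

end Diversity

theorem stmt7_general {X : Type*} [Fintype X] [DecidableEq X] (a b c : X)
    (hab : a ≠ b) (hac : a ≠ c) (hbc : b ≠ c)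
    (huniv : (Finset.univ : Finset X) = {a, b, c})
    (δ : Finset X → ℝ)
    (h2 : ∀ A : Finset X, δ A = 0 ↔ A.card ≤ 1)
    (h3 : ∀ A B C : Finset X, B.Nonempty → δ (A ∪ C) ≤ δ (A ∪ B) + δ (B ∪ C))
    (hne : 2 * δ {a, b, c} ≠ δ {a, b} + δ {a, c} + δ {b, c}) :
    (∀ x : Finset X → ℝ, x ∅ = 0 → (∑ A : Finset X, x A) = 0 →
        ∑ A : Finset X, ∑ B : Finset X, x A * x B * δ (A ∪ B) ≤ 0) ∧
    ¬ (∃ (m : ℕ) (φ : X → Fin m → ℝ), ∀ (A : Finset X) (hA : A.Nonempty),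
        δ A = ∑ i : Fin m,
          (A.sup' hA (fun x => φ x i) - A.inf' hA (fun x => φ x i))) := by
  have hδ₁ : ∀ x, δ {x} = 0 := fun x => (h2 {x}).2 (card_singleton x).le
  exact ⟨isNegativeType_of_univ_eq_triple h3 hab hac hbc huniv hδ₁,
    fun hL1 => hne (IsL1Embeddable.two_mul_triple_eq hL1 a b c)⟩

/-- A diversity on a three-element set `{a, b, c}` with
`2·δ({a,b,c}) ≠ δ({a,b}) + δ({a,c}) + δ({b,c})` is of negative type but not
`L₁`-embeddable. -/
theorem stmt7 {X : Type*} [Fintype X] [DecidableEq X] (a b c : X)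
    (hab : a ≠ b) (hac : a ≠ c) (hbc : b ≠ c)
    (huniv : (Finset.univ : Finset X) = {a, b, c})
    (δ : Finset X → ℝ)
    (h1 : ∀ A : Finset X, 0 ≤ δ A)
    (h2 : ∀ A : Finset X, δ A = 0 ↔ A.card ≤ 1)
    (h3 : ∀ A B C : Finset X, B.Nonempty → δ (A ∪ C) ≤ δ (A ∪ B) + δ (B ∪ C))
    (hne : 2 * δ {a, b, c} ≠ δ {a, b} + δ {a, c} + δ {b, c}) :
    (∀ x : Finset X → ℝ, x ∅ = 0 → (∑ A : Finset X, x A) = 0 →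
        ∑ A : Finset X, ∑ B : Finset X, x A * x B * δ (A ∪ B) ≤ 0) ∧
    ¬ (∃ (m : ℕ) (φ : X → Fin m → ℝ), ∀ (A : Finset X) (hA : A.Nonempty),
        δ A = ∑ i : Fin m,
          (A.sup' hA (fun x => φ x i) - A.inf' hA (fun x => φ x i))) :=
  stmt7_general a b c hab hac hbc huniv δ h2 h3 hne
end

section
/- Let k ∈ ℕ and let 𝒳 be any finite subset of ℝ^k on which δ_neg restricts (i.e. δ defined by δ(A) = δ_neg(A) for A ⊆ 𝒳). Then δ is of negative type: for every vector x ∈ ℝ^{𝒫(𝒳)} with x_∅ = 0 and ∑_{A⊆𝒳} x_A = 0 one has ∑_{A⊆𝒳} ∑_{B⊆𝒳} x_A x_B δ_neg(A ∪ B) ≤ 0. -/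
open Finset

attribute [local instance] Classical.propDecidable

/-- The diversity `δ_neg` on `ℝ^k`:
`δ_neg(A) = ∑ᵢ max{aᵢ : a ∈ A} − min{∑ᵢ aᵢ : a ∈ A}` for nonempty finite `A`, and
`δ_neg(∅) = 0`. -/
noncomputable def deltaNeg {k : ℕ} (A : Finset (Fin k → ℝ)) : ℝ :=
  if h : A.Nonempty then
    (∑ i : Fin k, A.sup' h (fun a => a i)) - A.inf' h (fun a => ∑ i : Fin k, a i)
  else 0

/-!
Both `A ↦ max_{a ∈ A} g a` and `A ↦ min_{a ∈ A} g a` turn unions into binary `max`/`min`, so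
`δ_neg(A ∪ B)` is a sum of kernels `max (f A) (f B)` and `-min (f A) (f B)`. On vectors summing
to zero, `min (f A) (f B)` is positive semidefinite: inserting the sets in increasing order of `f`
gives `∑∑ x_A x_B min (f A) (f B) ≥ c (∑ x_A)²` for every lower bound `c` of `f`. Since
`max = -min ∘ (-·)`, the `max` kernel is negative semidefinite there.
-/

section MinKernel

variable {ι : Type*} (x f : ι → ℝ)

theorem mul_sq_sum_le_sum_sum_mul_min (Q : Finset ι) (c : ℝ) (hc : ∀ A ∈ Q, c ≤ f A) :
    c * (∑ A ∈ Q, x A) ^ 2 ≤ ∑ A ∈ Q, ∑ B ∈ Q, x A * x B * min (f A) (f B) := by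
  induction Q using Finset.induction_on_min_value f generalizing c with
  | empty => simp
  | insert a s ha hmin ih =>
    have hs := ih (f a) hmin
    have hrow : ∑ B ∈ s, x a * x B * min (f a) (f B) = x a * f a * ∑ B ∈ s, x B := by
      rw [mul_sum]
      exact sum_congr rfl fun B hB => by rw [min_eq_left (hmin B hB)]; ring
    have hcol : ∑ A ∈ s, x A * x a * min (f A) (f a) = x a * f a * ∑ A ∈ s, x A := by
      rw [mul_sum]
      exact sum_congr rfl fun A hA => by rw [min_eq_right (hmin A hA)]; ring
    simp only [sum_insert ha, sum_add_distrib, hcol, hrow, min_self]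
    calc c * (x a + ∑ A ∈ s, x A) ^ 2
        ≤ f a * (x a + ∑ A ∈ s, x A) ^ 2 := by gcongr; exact hc a (mem_insert_self a s)
      _ ≤ _ := by linear_combination hs

theorem sum_sum_mul_min_nonneg (Q : Finset ι) (hx : ∑ A ∈ Q, x A = 0) :
    0 ≤ ∑ A ∈ Q, ∑ B ∈ Q, x A * x B * min (f A) (f B) := by
  obtain ⟨c, hc⟩ := (Q.image f).bddBelow
  simpa [hx] using mul_sq_sum_le_sum_sum_mul_min x f Q c fun A hA =>
    hc (mem_coe.mpr (mem_image_of_mem f hA))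

theorem sum_sum_mul_max_nonpos (Q : Finset ι) (hx : ∑ A ∈ Q, x A = 0) :
    ∑ A ∈ Q, ∑ B ∈ Q, x A * x B * max (f A) (f B) ≤ 0 := by
  have := sum_sum_mul_min_nonneg x (-f) Q hx
  simpa only [Pi.neg_apply, min_neg_neg, mul_neg, sum_neg_distrib, neg_nonneg] using this

end MinKernel

section UnionKernels

variable {α : Type*}

noncomputable def supOrZero (g : α → ℝ) (A : Finset α) : ℝ :=
  if h : A.Nonempty then A.sup' h g else 0

noncomputable def infOrZero (g : α → ℝ) (A : Finset α) : ℝ :=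
  if h : A.Nonempty then A.inf' h g else 0

variable [DecidableEq α]

theorem supOrZero_union (g : α → ℝ) {A B : Finset α} (hA : A.Nonempty) (hB : B.Nonempty) :
    supOrZero g (A ∪ B) = max (supOrZero g A) (supOrZero g B) := by
  simp only [supOrZero, dif_pos hA, dif_pos hB, dif_pos (hA.mono subset_union_left),
    sup'_union hA hB]

theorem infOrZero_union (g : α → ℝ) {A B : Finset α} (hA : A.Nonempty) (hB : B.Nonempty) :
    infOrZero g (A ∪ B) = min (infOrZero g A) (infOrZero g B) := by
  simp only [infOrZero, dif_pos hA, dif_pos hB, dif_pos (hA.mono subset_union_left),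
    inf'_union hA hB]

variable (Q : Finset (Finset α)) (x : Finset α → ℝ) (hx0 : x ∅ = 0)
include hx0

theorem sum_sum_mul_apply_union_eq (φ : Finset α → ℝ) (op : ℝ → ℝ → ℝ)
    (hφ : ∀ {A B : Finset α}, A.Nonempty → B.Nonempty → φ (A ∪ B) = op (φ A) (φ B)) :
    ∑ A ∈ Q, ∑ B ∈ Q, x A * x B * φ (A ∪ B) =
      ∑ A ∈ Q, ∑ B ∈ Q, x A * x B * op (φ A) (φ B) := by
  refine sum_congr rfl fun A _ => sum_congr rfl fun B _ => ?_
  rcases A.eq_empty_or_nonempty with rfl | hA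
  · simp [hx0]
  rcases B.eq_empty_or_nonempty with rfl | hB
  · simp [hx0]
  rw [hφ hA hB]

variable (hx : ∑ A ∈ Q, x A = 0)
include hx

theorem sum_sum_mul_supOrZero_union_nonpos (g : α → ℝ) :
    ∑ A ∈ Q, ∑ B ∈ Q, x A * x B * supOrZero g (A ∪ B) ≤ 0 := by
  rw [sum_sum_mul_apply_union_eq Q x hx0 _ max (supOrZero_union g)]
  exact sum_sum_mul_max_nonpos x _ Q hx

theorem sum_sum_mul_infOrZero_union_nonneg (g : α → ℝ) :
    0 ≤ ∑ A ∈ Q, ∑ B ∈ Q, x A * x B * infOrZero g (A ∪ B) := by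
  rw [sum_sum_mul_apply_union_eq Q x hx0 _ min (infOrZero_union g)]
  exact sum_sum_mul_min_nonneg x _ Q hx

end UnionKernels

theorem deltaNeg_eq_sum_supOrZero_sub_infOrZero {k : ℕ} (A : Finset (Fin k → ℝ)) :
    deltaNeg A = ∑ i, supOrZero (fun a => a i) A - infOrZero (fun a => ∑ i, a i) A := by
  by_cases hA : A.Nonempty <;> simp [deltaNeg, supOrZero, infOrZero, hA]

/-- For any finite subset `𝒳` of `ℝ^k`, the restriction of `δ_neg`
to subsets of `𝒳` is of negative type. -/
theorem stmt14 (k : ℕ) (𝒳 : Finset (Fin k → ℝ)) :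
    ∀ x : Finset (Fin k → ℝ) → ℝ, x ∅ = 0 → (∑ A ∈ 𝒳.powerset, x A) = 0 →
      ∑ A ∈ 𝒳.powerset, ∑ B ∈ 𝒳.powerset, x A * x B * deltaNeg (A ∪ B) ≤ 0 := by
  intro x hx0 hx
  have hmax : ∑ A ∈ 𝒳.powerset, ∑ B ∈ 𝒳.powerset, ∑ i,
      x A * x B * supOrZero (fun a => a i) (A ∪ B) ≤ 0 := by
    rw [sum_congr rfl fun A _ => sum_comm, sum_comm]
    exact sum_nonpos fun i _ => sum_sum_mul_supOrZero_union_nonpos _ x hx0 hx _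
  have hmin := sum_sum_mul_infOrZero_union_nonneg _ x hx0 hx fun a : Fin k → ℝ => ∑ i, a i
  simp only [deltaNeg_eq_sum_supOrZero_sub_infOrZero, mul_sub, mul_sum, sum_sub_distrib]
  exact sub_nonpos.mpr (hmax.trans hmin)
end
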